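/- arXiv:1105.4066 — 3 statements merged into one kernel-verified Lean document; each statement's English description precedes it below -/
import Mathlib

section
/- If M is a skew-adjoint-type operator pair, namely rot : dom(rot) ⊂ L² → L² and div : dom(div) ⊂ L² → L² are densely defined closed operators that are negative adjoints of each other (⟨rot Φ, Ψ⟩ = -⟨Φ, div Ψ⟩ extends to the adjoint relation), and ε, μ are bounded, symmetric, uniformly positive definite transformations on the respective L² spaces, then the operator 𝓜(E,H) := i(ε⁻¹ div H, μ⁻¹ rot E) is self-adjoint on the Hilbert space L²_ε × L²_μ equipped with the scalar products ⟨ε·,·⟩ and ⟨μ·,·⟩. -/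
/-!
Writing `S := ⟪A a, y⟫ + ⟪B b, x⟫`, symmetry of `ε` and `μ` cancels the weights against
`ε⁻¹`, `μ⁻¹`, so `⟨𝓜 u, v⟩_Λ = -i S` for `u = (a, b)`, `v = (x, y)`. The adjoint identity for `𝓜`
is therefore the adjoint identity of the antidiagonal block operator `(a, b) ↦ (B b, A a)`.
Testing it on `(a, 0)` and `(0, b)` decouples it into the adjoint identities of `A` and `B`
separately, and these are solved by `A* = -B`, `B* = -A`.
-/

open scoped InnerProductSpace

namespace LinearPMap

variable {𝕜 E F : Type*} [RCLike 𝕜] [NormedAddCommGroup E] [InnerProductSpace 𝕜 E]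
  [NormedAddCommGroup F] [InnerProductSpace 𝕜 F] [CompleteSpace E]

theorem exists_adjoint_apply_eq_iff {T : E →ₗ.[𝕜] F} (hT : Dense (T.domain : Set E))
    {y : F} {z : E} :
    (∃ hy : y ∈ T†.domain, T† ⟨y, hy⟩ = z) ↔
      ∀ x (hx : x ∈ T.domain), ⟪T ⟨x, hx⟩, y⟫_𝕜 = ⟪x, z⟫_𝕜 := by
  have h := congrArg ((y, z) ∈ ·) (adjoint_graph_eq_graph_adjoint hT)
  simpa only [mem_graph_iff, Submodule.mem_adjoint_iff, sub_eq_zero, Subtype.exists,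
    exists_and_left, exists_eq_left, forall_exists_index, and_imp, forall_apply_eq_imp_iff,
    forall_eq', eq_iff_iff] using h

theorem exists_apply_eq_neg_iff_of_adjoint_eq_neg {A : E →ₗ.[𝕜] F} {B : F →ₗ.[𝕜] E}
    (hA : Dense (A.domain : Set E)) (hAB : A† = -B) {y : F} {z : E} :
    (∃ hy : y ∈ B.domain, B ⟨y, hy⟩ = -z) ↔
      ∀ x (hx : x ∈ A.domain), ⟪A ⟨x, hx⟩, y⟫_𝕜 = ⟪x, z⟫_𝕜 := by
  rw [← exists_adjoint_apply_eq_iff hA, hAB]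
  simp only [neg_apply, neg_eq_iff_eq_neg]
  rfl

theorem forall_inner_add_inner_eq_iff_of_adjoint_eq_neg {A : E →ₗ.[𝕜] F} {B : F →ₗ.[𝕜] E}
    [CompleteSpace F] (hA : Dense (A.domain : Set E)) (hB : Dense (B.domain : Set F))
    (hAB : A† = -B) (hBA : B† = -A) {x : E} {y : F} {z₁ : E} {z₂ : F} :
    (∀ a b (ha : a ∈ A.domain) (hb : b ∈ B.domain),
        ⟪A ⟨a, ha⟩, y⟫_𝕜 + ⟪B ⟨b, hb⟩, x⟫_𝕜 = ⟪a, z₁⟫_𝕜 + ⟪b, z₂⟫_𝕜) ↔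
      (∃ hy : y ∈ B.domain, B ⟨y, hy⟩ = -z₁) ∧ ∃ hx : x ∈ A.domain, A ⟨x, hx⟩ = -z₂ := by
  rw [exists_apply_eq_neg_iff_of_adjoint_eq_neg hA hAB,
    exists_apply_eq_neg_iff_of_adjoint_eq_neg hB hBA]
  refine ⟨fun h ↦ ⟨fun a ha ↦ ?_, fun b hb ↦ ?_⟩, fun ⟨h₁, h₂⟩ a b ha hb ↦ by rw [h₁, h₂]⟩
  · simpa [show B ⟨0, _⟩ = 0 from B.map_zero] using h a 0 ha B.domain.zero_mem
  · simpa [show A ⟨0, _⟩ = 0 from A.map_zero] using h 0 b A.domain.zero_mem hb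

end LinearPMap

theorem ContinuousLinearEquiv.I_smul_symm_apply_eq_iff {E F : Type*} [TopologicalSpace E]
    [AddCommGroup E] [Module ℂ E] [TopologicalSpace F] [AddCommGroup F] [Module ℂ F]
    (e : E ≃L[ℂ] F) {x : E} {y : F} :
    Complex.I • e.symm y = x ↔ y = -(Complex.I • e x) := by
  constructor <;> rintro rfl <;> simp [smul_smul]

theorem maxwell_operator_selfadjoint_general
    {H₁ H₂ : Type*} [NormedAddCommGroup H₁] [InnerProductSpace ℂ H₁] [CompleteSpace H₁]
    [NormedAddCommGroup H₂] [InnerProductSpace ℂ H₂] [CompleteSpace H₂]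
    (A : H₁ →ₗ.[ℂ] H₂) (B : H₂ →ₗ.[ℂ] H₁)
    (hAdense : Dense (A.domain : Set H₁)) (hBdense : Dense (B.domain : Set H₂))
    (hAB : A.adjoint = -B) (hBA : B.adjoint = -A)
    (ε : H₁ ≃L[ℂ] H₁) (μ : H₂ ≃L[ℂ] H₂)
    (hεsym : ∀ x y : H₁, ⟪(ε : H₁ →L[ℂ] H₁) x, y⟫_ℂ = ⟪x, (ε : H₁ →L[ℂ] H₁) y⟫_ℂ)
    (hμsym : ∀ x y : H₂, ⟪(μ : H₂ →L[ℂ] H₂) x, y⟫_ℂ = ⟪x, (μ : H₂ →L[ℂ] H₂) y⟫_ℂ)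
    -- the weighted inner product ⟨·,·⟩_Λ
    (innerΛ : H₁ × H₂ → H₁ × H₂ → ℂ)
    (hinnerΛ : ∀ x y : H₁ × H₂,
      innerΛ x y = ⟪(ε : H₁ →L[ℂ] H₁) x.1, y.1⟫_ℂ + ⟪(μ : H₂ →L[ℂ] H₂) x.2, y.2⟫_ℂ)
    -- the Maxwell operator 𝓜(E,H) = i (ε⁻¹ div H, μ⁻¹ rot E)
    (Mop : ∀ u : H₁ × H₂, u.1 ∈ A.domain → u.2 ∈ B.domain → H₁ × H₂)
    (hMop : ∀ (u : H₁ × H₂) (h1 : u.1 ∈ A.domain) (h2 : u.2 ∈ B.domain),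
      Mop u h1 h2 = (Complex.I • ε.symm (B ⟨u.2, h2⟩), Complex.I • μ.symm (A ⟨u.1, h1⟩))) :
    -- self-adjointness of 𝓜 in L²_ε × L²_μ : the adjoint graph coincides with the graph
    ∀ v w : H₁ × H₂,
      (∀ (u : H₁ × H₂) (h1 : u.1 ∈ A.domain) (h2 : u.2 ∈ B.domain),
          innerΛ (Mop u h1 h2) v = innerΛ u w)
      ↔ ∃ (h1 : v.1 ∈ A.domain) (h2 : v.2 ∈ B.domain), Mop v h1 h2 = w := by
  rintro ⟨v₁, v₂⟩ ⟨w₁, w₂⟩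
  have hform : ∀ u h1 h2, innerΛ (Mop u h1 h2) (v₁, v₂) = innerΛ u (w₁, w₂) ↔
      ⟪A ⟨u.1, h1⟩, v₂⟫_ℂ + ⟪B ⟨u.2, h2⟩, v₁⟫_ℂ =
        ⟪u.1, Complex.I • ε w₁⟫_ℂ + ⟪u.2, Complex.I • μ w₂⟫_ℂ := by
    intro u h1 h2
    rw [hMop, hinnerΛ, hinnerΛ, hεsym u.1, hμsym u.2]
    simp only [map_smul, ContinuousLinearEquiv.coe_coe, ContinuousLinearEquiv.apply_symm_apply,
      inner_smul_left, inner_smul_right, Complex.conj_I]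
    constructor <;> intro h
    · linear_combination (norm := (ring_nf; simp only [Complex.I_sq]; ring)) Complex.I * h
    · linear_combination (norm := (ring_nf; simp only [Complex.I_sq]; ring)) -Complex.I * h
  have hgraph : (∃ h1 h2, Mop (v₁, v₂) h1 h2 = (w₁, w₂)) ↔
      (∃ h2 : v₂ ∈ B.domain, B ⟨v₂, h2⟩ = -(Complex.I • ε w₁)) ∧
        ∃ h1 : v₁ ∈ A.domain, A ⟨v₁, h1⟩ = -(Complex.I • μ w₂) := by
    simp only [hMop, Prod.mk.injEq, ContinuousLinearEquiv.I_smul_symm_apply_eq_iff,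
      exists_and_left, exists_and_right]
  rw [hgraph, ← LinearPMap.forall_inner_add_inner_eq_iff_of_adjoint_eq_neg hAdense hBdense hAB hBA,
    Prod.forall]
  exact forall₂_congr fun a b ↦ forall₂_congr (hform (a, b))

theorem maxwell_operator_selfadjoint
    {H₁ H₂ : Type*} [NormedAddCommGroup H₁] [InnerProductSpace ℂ H₁] [CompleteSpace H₁]
    [NormedAddCommGroup H₂] [InnerProductSpace ℂ H₂] [CompleteSpace H₂]
    (A : H₁ →ₗ.[ℂ] H₂) (B : H₂ →ₗ.[ℂ] H₁)
    (hAdense : Dense (A.domain : Set H₁)) (hBdense : Dense (B.domain : Set H₂))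
    (hAclosed : A.IsClosed) (hBclosed : B.IsClosed)
    (hAB : A.adjoint = -B) (hBA : B.adjoint = -A)
    (ε : H₁ ≃L[ℂ] H₁) (μ : H₂ ≃L[ℂ] H₂)
    (hεsym : ∀ x y : H₁, ⟪(ε : H₁ →L[ℂ] H₁) x, y⟫_ℂ = ⟪x, (ε : H₁ →L[ℂ] H₁) y⟫_ℂ)
    (hμsym : ∀ x y : H₂, ⟪(μ : H₂ →L[ℂ] H₂) x, y⟫_ℂ = ⟪x, (μ : H₂ →L[ℂ] H₂) y⟫_ℂ)
    (hεpos : ∃ c > 0, ∀ x : H₁, c * ‖x‖ ^ 2 ≤ (⟪(ε : H₁ →L[ℂ] H₁) x, x⟫_ℂ).re)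
    (hμpos : ∃ c > 0, ∀ x : H₂, c * ‖x‖ ^ 2 ≤ (⟪(μ : H₂ →L[ℂ] H₂) x, x⟫_ℂ).re)
    -- the weighted inner product ⟨·,·⟩_Λ
    (innerΛ : H₁ × H₂ → H₁ × H₂ → ℂ)
    (hinnerΛ : ∀ x y : H₁ × H₂,
      innerΛ x y = ⟪(ε : H₁ →L[ℂ] H₁) x.1, y.1⟫_ℂ + ⟪(μ : H₂ →L[ℂ] H₂) x.2, y.2⟫_ℂ)
    -- the Maxwell operator 𝓜(E,H) = i (ε⁻¹ div H, μ⁻¹ rot E)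
    (Mop : ∀ u : H₁ × H₂, u.1 ∈ A.domain → u.2 ∈ B.domain → H₁ × H₂)
    (hMop : ∀ (u : H₁ × H₂) (h1 : u.1 ∈ A.domain) (h2 : u.2 ∈ B.domain),
      Mop u h1 h2 = (Complex.I • ε.symm (B ⟨u.2, h2⟩), Complex.I • μ.symm (A ⟨u.1, h1⟩))) :
    -- self-adjointness of 𝓜 in L²_ε × L²_μ : the adjoint graph coincides with the graph
    ∀ v w : H₁ × H₂,
      (∀ (u : H₁ × H₂) (h1 : u.1 ∈ A.domain) (h2 : u.2 ∈ B.domain),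
          innerΛ (Mop u h1 h2) v = innerΛ u w)
      ↔ ∃ (h1 : v.1 ∈ A.domain) (h2 : v.2 ∈ B.domain), Mop v h1 h2 = w :=
  maxwell_operator_selfadjoint_general A B hAdense hBdense hAB hBA ε μ hεsym hμsym innerΛ hinnerΛ
    Mop hMop
end

section
/- The refined ε-Helmholtz decomposition holds: L²,q(Ω) = closure(rot R̊^{q-1}(Ω)) ⊕_ε εℋ^q(Ω) ⊕_ε closure(div D^{q+1}(Ω)), where εℋ^q(Ω) := R̊^q(Ω) ∩ ε⁻¹ ₀D^q(Ω) with rot-free and ε-divergence-free conditions (the ε-harmonic Dirichlet forms), all three summands being mutually orthogonal with respect to ⟨ε·,·⟩. -/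
/-!
Since `V ⊥ W`, the splitting `H = Wᗮ ⊕ W` refines to `H = V ⊕ (Wᗮ ⊓ ε⁻¹(Vᗮ)) ⊕ W` once
`H = V ⊕ ε⁻¹(Vᗮ)`. That splitting is Lax–Milgram for the real form `(u, w) ↦ re ⟪ε u, w⟫` on `V`,
coercive because `ε` is; the real-part orthogonality it yields upgrades to complex orthogonality
by testing against scalar multiples.
-/

open scoped InnerProductSpace

namespace Submodule

section Algebra

variable {R M : Type*} [Ring R] [AddCommGroup M] [Module R M]

theorem eq_and_eq_of_add_eq_add_of_disjoint {p q : Submodule R M} (h : Disjoint p q)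
    {a a' b b' : M} (ha : a ∈ p) (ha' : a' ∈ p) (hb : b ∈ q) (hb' : b' ∈ q)
    (hab : a + b = a' + b') : a = a' ∧ b = b' := by
  have hdiff : a - a' = b' - b := by rw [sub_eq_sub_iff_add_eq_add, hab, add_comm]
  have h0 : a - a' = 0 :=
    disjoint_def.mp h _ (p.sub_mem ha ha') (hdiff ▸ q.sub_mem hb' hb)
  exact ⟨sub_eq_zero.mp h0, (sub_eq_zero.mp (hdiff ▸ h0)).symm⟩

theorem existsUnique_add_add_of_isCompl {p q r s : Submodule R M} (hpq : IsCompl p q)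
    (hrs : IsCompl r s) (hpr : p ≤ r) (x : M) :
    ∃! u : M × M × M, u.1 ∈ p ∧ u.2.1 ∈ r ⊓ q ∧ u.2.2 ∈ s ∧ x = u.1 + u.2.1 + u.2.2 := by
  obtain ⟨y, w, hy, hw, rfl⟩ := codisjoint_iff_exists_add_eq.mp hrs.codisjoint x
  obtain ⟨v, m, hv, hm, rfl⟩ := codisjoint_iff_exists_add_eq.mp hpq.codisjoint y
  have hmr : m ∈ r := by simpa using r.sub_mem hy (hpr hv)
  refine ⟨(v, m, w), ⟨hv, ⟨hmr, hm⟩, hw, rfl⟩, ?_⟩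
  rintro ⟨v', m', w'⟩ ⟨hv', ⟨hm'r, hm'⟩, hw', hx⟩
  obtain ⟨hy', rfl⟩ := eq_and_eq_of_add_eq_add_of_disjoint hrs.disjoint
    (r.add_mem (hpr hv') hm'r) hy hw' hw hx.symm
  obtain ⟨rfl, rfl⟩ := eq_and_eq_of_add_eq_add_of_disjoint hpq.disjoint hv' hv hm' hm hy'
  rfl

end Algebra

section InnerProduct

open RCLike

variable {𝕜 H : Type*} [RCLike 𝕜] [NormedAddCommGroup H] [InnerProductSpace 𝕜 H]

theorem mem_orthogonal_of_forall_re_inner_eq_zero {K : Submodule 𝕜 H} {x : H}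
    (hx : ∀ u ∈ K, re ⟪x, u⟫_𝕜 = 0) : x ∈ Kᗮ := by
  intro u hu
  have h := hx (⟪u, x⟫_𝕜 • u) (K.smul_mem _ hu)
  rw [inner_smul_right, ← inner_conj_symm x u, mul_conj, ← ofReal_pow, ofReal_re] at h
  simpa using h

variable {A : H →L[𝕜] H}

theorem exists_sub_mem_comap_orthogonal (hA : ∃ c > 0, ∀ x, c * ‖x‖ ^ 2 ≤ re ⟪A x, x⟫_𝕜)
    (V : Submodule 𝕜 H) [CompleteSpace V] (y : H) : ∃ v ∈ V, A (y - v) ∈ Vᗮ := by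
  let : InnerProductSpace ℝ H := InnerProductSpace.rclikeToReal 𝕜 H
  let V' := V.restrictScalars ℝ
  have : CompleteSpace V' := ‹CompleteSpace V›
  let B : V' →L[ℝ] V' →L[ℝ] ℝ :=
    (innerSL ℝ).bilinearComp ((A.restrictScalars ℝ).comp V'.subtypeL) V'.subtypeL
  have hB : ∀ u w : V', B u w = re ⟪A u, w⟫_𝕜 := fun _ _ => rfl
  obtain ⟨c, hc, hcoer⟩ := hA
  have hBc : IsCoercive B := ⟨c, hc, fun u => by rw [hB, mul_assoc, ← sq]; exact hcoer u⟩
  obtain ⟨v, hv⟩ := hBc.continuousLinearEquivOfBilin.surjective (V'.orthogonalProjectionOnto (A y))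
  refine ⟨v, v.2, mem_orthogonal_of_forall_re_inner_eq_zero fun u hu => ?_⟩
  have hLM := hBc.continuousLinearEquivOfBilin_apply v ⟨u, hu⟩
  rw [hv, hB, inner_orthogonalProjectionOnto_eq_of_mem_right] at hLM
  rw [map_sub, inner_sub_left, map_sub]
  exact sub_eq_zero.mpr hLM

theorem eq_zero_of_mem_of_apply_mem_orthogonal
    (hA : ∃ c > 0, ∀ x, c * ‖x‖ ^ 2 ≤ re ⟪A x, x⟫_𝕜) {V : Submodule 𝕜 H} {v : H}
    (hv : v ∈ V) (hAv : A v ∈ Vᗮ) : v = 0 := by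
  obtain ⟨c, hc, hcoer⟩ := hA
  have h0 : ⟪A v, v⟫_𝕜 = 0 := inner_eq_zero_symm.mp (hAv v hv)
  have hle : c * ‖v‖ ^ 2 ≤ c * 0 := by simpa [h0] using hcoer v
  have hsq : ‖v‖ ^ 2 ≤ 0 := le_of_mul_le_mul_left hle hc
  simpa using hsq

theorem isCompl_comap_orthogonal (hA : ∃ c > 0, ∀ x, c * ‖x‖ ^ 2 ≤ re ⟪A x, x⟫_𝕜)
    (V : Submodule 𝕜 H) [CompleteSpace V] : IsCompl V (Vᗮ.comap (A : H →ₗ[𝕜] H)) where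
  disjoint := disjoint_def.mpr fun _ hv hAv => eq_zero_of_mem_of_apply_mem_orthogonal hA hv hAv
  codisjoint := codisjoint_iff_exists_add_eq.mpr fun y => by
    obtain ⟨v, hv, hyv⟩ := exists_sub_mem_comap_orthogonal hA V y
    exact ⟨v, y - v, hv, hyv, add_sub_cancel v y⟩

end InnerProduct

end Submodule

theorem refined_helmholtz_decomposition_eps_general
    {H : Type*} [NormedAddCommGroup H] [InnerProductSpace ℂ H] [CompleteSpace H]
    (ε : H ≃L[ℂ] H)
    (hpos : ∃ c > 0, ∀ x : H, c * ‖x‖ ^ 2 ≤ (⟪(ε : H →L[ℂ] H) x, x⟫_ℂ).re)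
    (V W : Submodule ℂ H) (hV : IsClosed (V : Set H)) (hW : IsClosed (W : Set H))
    (hVW : ∀ v ∈ V, ∀ w ∈ W, ⟪v, w⟫_ℂ = 0) :
    -- the ε-harmonic subspace
    (∀ v ∈ V, ∀ m : H, ((∀ w ∈ W, ⟪w, m⟫_ℂ = 0) ∧ (ε : H →L[ℂ] H) m ∈ Vᗮ) →
        ⟪(ε : H →L[ℂ] H) m, v⟫_ℂ = 0) ∧
    (∀ m : H, ((∀ w ∈ W, ⟪w, m⟫_ℂ = 0) ∧ (ε : H →L[ℂ] H) m ∈ Vᗮ) →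
        ∀ w ∈ W, ⟪m, w⟫_ℂ = 0) ∧
    (∀ v ∈ V, ∀ w ∈ W, ⟪v, w⟫_ℂ = 0) ∧
    (∀ x : H, ∃! p : H × H × H,
      p.1 ∈ V ∧
      ((∀ w ∈ W, ⟪w, p.2.1⟫_ℂ = 0) ∧ (ε : H →L[ℂ] H) p.2.1 ∈ Vᗮ) ∧
      p.2.2 ∈ W ∧ x = p.1 + p.2.1 + p.2.2) := by
  have : CompleteSpace V := hV.completeSpace_coe
  have : CompleteSpace W := hW.completeSpace_coe
  have hVW' : V ≤ Wᗮ := Submodule.isOrtho_iff_inner_eq.mpr hVW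
  refine ⟨fun v hv m hm => inner_eq_zero_symm.mp (hm.2 v hv),
    fun m hm w hw => inner_eq_zero_symm.mp (hm.1 w hw), hVW, fun x => ?_⟩
  exact Submodule.existsUnique_add_add_of_isCompl (Submodule.isCompl_comap_orthogonal hpos V)
    W.isCompl_orthogonal.symm hVW' x

theorem refined_helmholtz_decomposition_eps
    {H : Type*} [NormedAddCommGroup H] [InnerProductSpace ℂ H] [CompleteSpace H]
    (ε : H ≃L[ℂ] H)
    (hsym : ∀ x y : H, ⟪(ε : H →L[ℂ] H) x, y⟫_ℂ = ⟪x, (ε : H →L[ℂ] H) y⟫_ℂ)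
    (hpos : ∃ c > 0, ∀ x : H, c * ‖x‖ ^ 2 ≤ (⟪(ε : H →L[ℂ] H) x, x⟫_ℂ).re)
    (V W : Submodule ℂ H) (hV : IsClosed (V : Set H)) (hW : IsClosed (W : Set H))
    (hVW : ∀ v ∈ V, ∀ w ∈ W, ⟪v, w⟫_ℂ = 0) :
    -- the ε-harmonic subspace
    (∀ v ∈ V, ∀ m : H, ((∀ w ∈ W, ⟪w, m⟫_ℂ = 0) ∧ (ε : H →L[ℂ] H) m ∈ Vᗮ) →
        ⟪(ε : H →L[ℂ] H) m, v⟫_ℂ = 0) ∧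
    (∀ m : H, ((∀ w ∈ W, ⟪w, m⟫_ℂ = 0) ∧ (ε : H →L[ℂ] H) m ∈ Vᗮ) →
        ∀ w ∈ W, ⟪m, w⟫_ℂ = 0) ∧
    (∀ v ∈ V, ∀ w ∈ W, ⟪v, w⟫_ℂ = 0) ∧
    (∀ x : H, ∃! p : H × H × H,
      p.1 ∈ V ∧
      ((∀ w ∈ W, ⟪w, p.2.1⟫_ℂ = 0) ∧ (ε : H →L[ℂ] H) p.2.1 ∈ Vᗮ) ∧
      p.2.2 ∈ W ∧ x = p.1 + p.2.1 + p.2.2) :=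
  refined_helmholtz_decomposition_eps_general ε hpos V W hV hW hVW
end

section
/- Weighted convolution boundedness (McOwen-type estimate): for -N/2 < t < s < N/2, the integral operator (Kf)(x) := ∫_{ℝᴺ} |x-y|^{s-t-N} f(y) dy maps L²_s(ℝᴺ) boundedly into L²_t(ℝᴺ), where L²_σ denotes the weighted L² space with norm ‖ρ^σ f‖_{L²}, ρ(x) = (1+|x|²)^{1/2}. -/
/-!
Conjugating by the weights, the claim is that the kernel `ρ(x)^t ‖x - y‖^(s-t-N) ρ(y)^(-s)` is
bounded on `L²`. This follows from Schur's test with the test function `ρ^α` for any `α` with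
`max (s - N) (-t - N) < α < min t (-s)`, an interval that is nonempty exactly because
`-N/2 < t < s < N/2`. Both Schur conditions reduce to the potential estimate
`∫ ‖x - y‖^(a-N) ρ(y)^(-b) dy ≤ C ρ(x)^(a-b)` for `0 < a < b < N`. For it, split the integral
into the regions `‖y - x‖ ≤ ρ(x)/2`, where `ρ(y) ≥ ρ(x)/4`; the rest of `‖y‖ ≤ 2ρ(x)`, where the
kernel is at most `(ρ(x)/2)^(a-N)`; and `‖y‖ > 2ρ(x)`, where `‖x - y‖ ≥ ‖y‖/2`. What remains in
each region is an integral of `‖z‖^p` over a ball or the complement of a ball, which scales like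
`ρ(x)^(a-b)`.
-/

open MeasureTheory Metric Set Module
open scoped ENNReal

theorem ENNReal.rpow_two_inv_sq (x : ℝ≥0∞) : (x ^ (2⁻¹ : ℝ)) ^ 2 = x := by
  simpa using ENNReal.rpow_inv_natCast_pow (n := 2) two_ne_zero x

theorem ENNReal.sq_rpow_two_inv (x : ℝ≥0∞) : (x ^ 2) ^ (2⁻¹ : ℝ) = x := by
  simpa using ENNReal.pow_rpow_inv_natCast (n := 2) two_ne_zero x

theorem ENNReal.rpow_le_rpow_of_nonpos {x y : ℝ≥0∞} {z : ℝ} (hxy : x ≤ y) (hz : z ≤ 0) :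
    y ^ z ≤ x ^ z := by
  rw [← neg_neg z, ENNReal.rpow_neg y, ENNReal.rpow_neg x]
  exact ENNReal.inv_le_inv.2 (ENNReal.rpow_le_rpow hxy (neg_nonneg.2 hz))

theorem ENNReal.ofReal_mul_rpow_mul_ofReal_mul_rpow {c₁ c₂ r : ℝ} (hc₁ : 0 ≤ c₁) (hc₂ : 0 ≤ c₂)
    (hr : 0 < r) {p q s : ℝ} (hpq : p + q = s) (I : ℝ≥0∞) :
    ENNReal.ofReal (c₁ * r) ^ p * (ENNReal.ofReal (c₂ * r) ^ q * I) =
      ENNReal.ofReal c₁ ^ p * ENNReal.ofReal c₂ ^ q * I * ENNReal.ofReal r ^ s := by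
  rw [ENNReal.ofReal_mul hc₁, ENNReal.ofReal_mul hc₂,
    ENNReal.mul_rpow_of_ne_top ENNReal.ofReal_ne_top ENNReal.ofReal_ne_top,
    ENNReal.mul_rpow_of_ne_top ENNReal.ofReal_ne_top ENNReal.ofReal_ne_top, ← hpq,
    ENNReal.rpow_add _ _ (by positivity) ENNReal.ofReal_ne_top]
  ring

theorem ENNReal.le_ofReal_toReal_add_one_sq {c : ℝ≥0∞} (hc : c ≠ ∞) :
    c ≤ ENNReal.ofReal (c.toReal + 1) ^ 2 :=
  calc c = ENNReal.ofReal c.toReal := (ENNReal.ofReal_toReal hc).symm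
    _ ≤ ENNReal.ofReal (c.toReal + 1) := ENNReal.ofReal_le_ofReal (by linarith)
    _ ≤ ENNReal.ofReal (c.toReal + 1) ^ 2 :=
      le_self_pow₀ (ENNReal.one_le_ofReal.2 (by linarith [ENNReal.toReal_nonneg (a := c)]))
        two_ne_zero

section Norm

variable {E : Type*} [NormedAddCommGroup E]

theorem enorm_rpow_of_ne_zero {z : E} (hz : z ≠ 0) (p : ℝ) :
    ‖z‖ₑ ^ p = ENNReal.ofReal (‖z‖ ^ p) := by
  rw [← ofReal_norm, ENNReal.ofReal_rpow_of_pos (norm_pos_iff.2 hz)]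

-- Only `≤`: at `z = 0` with `p < 0`, `Real.rpow` gives `0` where `ℝ≥0∞` gives `⊤`.
theorem enorm_norm_rpow_le (z : E) (p : ℝ) : ‖‖z‖ ^ p‖ₑ ≤ ‖z‖ₑ ^ p := by
  rw [Real.enorm_of_nonneg (by positivity)]
  rcases le_or_gt 0 p with hp | hp
  · rw [← ofReal_norm, ENNReal.ofReal_rpow_of_nonneg (norm_nonneg z) hp]
  rcases eq_or_ne z 0 with rfl | hz
  · simp [ENNReal.zero_rpow_of_neg hp]
  · rw [enorm_rpow_of_ne_zero hz]

theorem preimage_smul_closedBall_zero [NormedSpace ℝ E] {R : ℝ} (hR : 0 < R) :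
    (R • ·) ⁻¹' closedBall (0 : E) R = closedBall 0 1 := by
  ext z
  simp [norm_smul, abs_of_pos hR, mul_le_iff_le_one_right hR]

noncomputable def japaneseBracket (x : E) : ℝ := √(1 + ‖x‖ ^ 2)

theorem one_le_japaneseBracket (x : E) : 1 ≤ japaneseBracket x :=
  Real.one_le_sqrt.2 (by nlinarith [sq_nonneg ‖x‖])

theorem japaneseBracket_pos (x : E) : 0 < japaneseBracket x :=
  one_pos.trans_le (one_le_japaneseBracket x)

theorem norm_le_japaneseBracket (x : E) : ‖x‖ ≤ japaneseBracket x :=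
  Real.le_sqrt_of_sq_le (by linarith)

theorem japaneseBracket_le_one_add_norm (x : E) : japaneseBracket x ≤ 1 + ‖x‖ :=
  Real.sqrt_le_iff.2 ⟨by positivity, by nlinarith [norm_nonneg x]⟩

@[fun_prop]
theorem continuous_japaneseBracket : Continuous (japaneseBracket : E → ℝ) := by
  unfold japaneseBracket; fun_prop

theorem enorm_le_ofReal_japaneseBracket (x : E) : ‖x‖ₑ ≤ ENNReal.ofReal (japaneseBracket x) := by
  rw [← ofReal_norm]; exact ENNReal.ofReal_le_ofReal (norm_le_japaneseBracket x)

theorem japaneseBracket_le_four_mul {x y : E} (h : ‖y - x‖ ≤ 2⁻¹ * japaneseBracket x) :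
    japaneseBracket x ≤ 4 * japaneseBracket y := by
  have := norm_sub_norm_le x y
  have := norm_sub_rev x y
  linarith [japaneseBracket_le_one_add_norm x, one_le_japaneseBracket y,
    norm_le_japaneseBracket y]

theorem norm_le_two_mul_norm_sub {x y : E} (h : 2 * japaneseBracket x < ‖y‖) :
    ‖y‖ ≤ 2 * ‖x - y‖ := by
  have := norm_sub_norm_le y x
  have := norm_sub_rev x y
  linarith [norm_le_japaneseBracket x]

theorem ofReal_japaneseBracket_rpow_ne_zero (x : E) (σ : ℝ) :
    ENNReal.ofReal (japaneseBracket x) ^ σ ≠ 0 :=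
  (ENNReal.rpow_pos (ENNReal.ofReal_pos.2 (japaneseBracket_pos x)) ENNReal.ofReal_ne_top).ne'

theorem ofReal_japaneseBracket_rpow_ne_top (x : E) (σ : ℝ) :
    ENNReal.ofReal (japaneseBracket x) ^ σ ≠ ∞ :=
  ENNReal.rpow_ne_top_of_ne_zero (ENNReal.ofReal_pos.2 (japaneseBracket_pos x)).ne'
    ENNReal.ofReal_ne_top

theorem ofReal_japaneseBracket_rpow_mul_rpow (x : E) (σ τ : ℝ) :
    ENNReal.ofReal (japaneseBracket x) ^ σ * ENNReal.ofReal (japaneseBracket x) ^ τ =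
      ENNReal.ofReal (japaneseBracket x) ^ (σ + τ) :=
  (ENNReal.rpow_add σ τ (ENNReal.ofReal_pos.2 (japaneseBracket_pos x)).ne'
    ENNReal.ofReal_ne_top).symm

theorem enorm_one_add_norm_sq_rpow (x : E) (σ : ℝ) :
    ‖(1 + ‖x‖ ^ 2) ^ (σ / 2)‖ₑ = ENNReal.ofReal (japaneseBracket x) ^ σ := by
  rw [Real.enorm_of_nonneg (by positivity), Real.rpow_div_two_eq_sqrt σ (by positivity),
    ENNReal.ofReal_rpow_of_pos (japaneseBracket_pos x), japaneseBracket]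

-- The kernel of `ρ^t ∘ K ∘ ρ^(-s)`; for `p < 0` it is `⊤` on the (null) diagonal.
noncomputable def weightedRieszKernel (t s p : ℝ) (x y : E) : ℝ≥0∞ :=
  ENNReal.ofReal (japaneseBracket x) ^ t * ‖x - y‖ₑ ^ p * ENNReal.ofReal (japaneseBracket y) ^ (-s)

theorem enorm_one_add_norm_sq_rpow_mul_integral_le [MeasurableSpace E] (μ : Measure E)
    (f : E → ℝ) (s t p : ℝ) (x : E) :
    ‖(1 + ‖x‖ ^ 2) ^ (t / 2) * ∫ y, ‖x - y‖ ^ p * f y ∂μ‖ₑ ≤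
      ∫⁻ y, weightedRieszKernel t s p x y * ‖(1 + ‖y‖ ^ 2) ^ (s / 2) * f y‖ₑ ∂μ := by
  calc ‖(1 + ‖x‖ ^ 2) ^ (t / 2) * ∫ y, ‖x - y‖ ^ p * f y ∂μ‖ₑ
      ≤ ENNReal.ofReal (japaneseBracket x) ^ t * ∫⁻ y, ‖x - y‖ₑ ^ p * ‖f y‖ₑ ∂μ := by
        rw [enorm_mul, enorm_one_add_norm_sq_rpow]
        gcongr
        refine (enorm_integral_le_lintegral_enorm _).trans (lintegral_mono fun y => ?_)
        rw [enorm_mul]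
        gcongr
        exact enorm_norm_rpow_le _ _
    _ = ∫⁻ y, weightedRieszKernel t s p x y * ‖(1 + ‖y‖ ^ 2) ^ (s / 2) * f y‖ₑ ∂μ := by
        rw [← lintegral_const_mul' _ _ (ofReal_japaneseBracket_rpow_ne_top x t)]
        refine lintegral_congr fun y => ?_
        rw [weightedRieszKernel, enorm_mul, enorm_one_add_norm_sq_rpow, mul_assoc (_ * _),
          ← mul_assoc (_ ^ (-s)), ofReal_japaneseBracket_rpow_mul_rpow, neg_add_cancel,
          ENNReal.rpow_zero, one_mul, mul_assoc]

end Norm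

namespace MeasureTheory

section Schur

variable {α : Type*} [MeasurableSpace α] {μ : Measure α}

theorem lintegral_mul_sq_le {f g : α → ℝ≥0∞} (hf : AEMeasurable f μ) (hg : AEMeasurable g μ) :
    (∫⁻ a, f a * g a ∂μ) ^ 2 ≤ (∫⁻ a, f a ^ 2 ∂μ) * ∫⁻ a, g a ^ 2 ∂μ := by
  have h := ENNReal.lintegral_mul_le_Lp_mul_Lq μ Real.HolderConjugate.two_two hf hg
  simp only [Pi.mul_apply, ENNReal.rpow_two, one_div] at h
  calc (∫⁻ a, f a * g a ∂μ) ^ 2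
      ≤ ((∫⁻ a, f a ^ 2 ∂μ) ^ (2⁻¹ : ℝ) * (∫⁻ a, g a ^ 2 ∂μ) ^ (2⁻¹ : ℝ)) ^ 2 := by gcongr
    _ = (∫⁻ a, f a ^ 2 ∂μ) * ∫⁻ a, g a ^ 2 ∂μ := by
      rw [mul_pow, ENNReal.rpow_two_inv_sq, ENNReal.rpow_two_inv_sq]

theorem sq_lintegral_mul_le_of_weight {K w F : α → ℝ≥0∞} (hK : AEMeasurable K μ)
    (hw : AEMeasurable w μ) (hF : AEMeasurable F μ) (hw0 : ∀ a, w a ≠ 0) (hw_top : ∀ a, w a ≠ ∞) :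
    (∫⁻ a, K a * F a ∂μ) ^ 2 ≤ (∫⁻ a, K a * w a ∂μ) * ∫⁻ a, K a * (w a)⁻¹ * F a ^ 2 ∂μ := by
  have hsplit : ∀ a, K a * F a =
      (K a * w a) ^ (2⁻¹ : ℝ) * ((K a * (w a)⁻¹) ^ (2⁻¹ : ℝ) * F a) := by
    intro a
    rw [← mul_assoc, ← ENNReal.mul_rpow_of_nonneg _ _ (by positivity),
      mul_mul_mul_comm, ENNReal.mul_inv_cancel (hw0 a) (hw_top a), mul_one,
      ← sq, ENNReal.sq_rpow_two_inv]
  calc (∫⁻ a, K a * F a ∂μ) ^ 2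
      = (∫⁻ a, (K a * w a) ^ (2⁻¹ : ℝ) * ((K a * (w a)⁻¹) ^ (2⁻¹ : ℝ) * F a) ∂μ) ^ 2 := by
        simp_rw [hsplit]
    _ ≤ (∫⁻ a, ((K a * w a) ^ (2⁻¹ : ℝ)) ^ 2 ∂μ) *
          ∫⁻ a, ((K a * (w a)⁻¹) ^ (2⁻¹ : ℝ) * F a) ^ 2 ∂μ :=
        lintegral_mul_sq_le ((hK.mul hw).pow_const _) (((hK.mul hw.inv).pow_const _).mul hF)
    _ = (∫⁻ a, K a * w a ∂μ) * ∫⁻ a, K a * (w a)⁻¹ * F a ^ 2 ∂μ := by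
        simp_rw [mul_pow, ENNReal.rpow_two_inv_sq]

theorem eLpNorm_two_le_of_lintegral_sq_le {ε ε' : Type*} [ENorm ε] [ENorm ε'] {f : α → ε}
    {g : α → ε'} {c : ℝ≥0∞} (h : ∫⁻ a, ‖f a‖ₑ ^ 2 ∂μ ≤ c ^ 2 * ∫⁻ a, ‖g a‖ₑ ^ 2 ∂μ) :
    eLpNorm f 2 μ ≤ c * eLpNorm g 2 μ := by
  simp only [eLpNorm_eq_lintegral_rpow_enorm_toReal two_ne_zero ENNReal.ofNat_ne_top,
    ENNReal.toReal_ofNat, ENNReal.rpow_two, one_div]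
  calc (∫⁻ a, ‖f a‖ₑ ^ 2 ∂μ) ^ (2⁻¹ : ℝ)
      ≤ (c ^ 2 * ∫⁻ a, ‖g a‖ₑ ^ 2 ∂μ) ^ (2⁻¹ : ℝ) := ENNReal.rpow_le_rpow h (by norm_num)
    _ = c * (∫⁻ a, ‖g a‖ₑ ^ 2 ∂μ) ^ (2⁻¹ : ℝ) := by
      rw [ENNReal.mul_rpow_of_nonneg _ _ (by norm_num), ENNReal.sq_rpow_two_inv]

variable {β : Type*} [MeasurableSpace β] {ν : Measure β} [SFinite μ] [SFinite ν]

theorem lintegral_sq_lintegral_mul_le_of_schur {K : α → β → ℝ≥0∞}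
    (hK : Measurable (Function.uncurry K)) {p : β → ℝ≥0∞} {q : α → ℝ≥0∞} (hp : Measurable p)
    (hq : Measurable q) (hp0 : ∀ y, p y ≠ 0) (hp_top : ∀ y, p y ≠ ∞) {C₁ C₂ : ℝ≥0∞}
    (h₁ : ∀ x, ∫⁻ y, K x y * p y ∂ν ≤ C₁ * q x) (h₂ : ∀ y, ∫⁻ x, K x y * q x ∂μ ≤ C₂ * p y)
    {F : β → ℝ≥0∞} (hF : AEMeasurable F ν) :
    ∫⁻ x, (∫⁻ y, K x y * F y ∂ν) ^ 2 ∂μ ≤ C₁ * C₂ * ∫⁻ y, F y ^ 2 ∂ν := by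
  set G : α → β → ℝ≥0∞ := fun x y => q x * K x y * ((p y)⁻¹ * F y ^ 2)
  have hG : AEMeasurable (Function.uncurry G) (μ.prod ν) :=
    ((hq.comp measurable_fst).mul hK).aemeasurable.mul
      ((hp.inv.comp measurable_snd).aemeasurable.mul (hF.pow_const 2).comp_snd)
  have hKx : ∀ x, Measurable (K x) := fun x => hK.comp measurable_prodMk_left
  calc ∫⁻ x, (∫⁻ y, K x y * F y ∂ν) ^ 2 ∂μ
      ≤ ∫⁻ x, C₁ * ∫⁻ y, G x y ∂ν ∂μ := by
        refine lintegral_mono fun x => ?_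
        calc (∫⁻ y, K x y * F y ∂ν) ^ 2
            ≤ (∫⁻ y, K x y * p y ∂ν) * ∫⁻ y, K x y * (p y)⁻¹ * F y ^ 2 ∂ν :=
              sq_lintegral_mul_le_of_weight (hKx x).aemeasurable hp.aemeasurable hF hp0 hp_top
          _ ≤ C₁ * q x * ∫⁻ y, K x y * (p y)⁻¹ * F y ^ 2 ∂ν := by gcongr; exact h₁ x
          _ = C₁ * ∫⁻ y, G x y ∂ν := by
              rw [mul_assoc, ← lintegral_const_mul'' (q x)
                (f := fun y => K x y * (p y)⁻¹ * F y ^ 2)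
                (((hKx x).mul hp.inv).aemeasurable.mul (hF.pow_const 2))]
              simp only [G, mul_assoc]
    _ = C₁ * ∫⁻ y, ∫⁻ x, G x y ∂μ ∂ν := by
        rw [lintegral_const_mul'' C₁ (f := fun x => ∫⁻ y, G x y ∂ν) hG.lintegral_prod_right',
          lintegral_lintegral_swap hG]
    _ = C₁ * ∫⁻ y, (∫⁻ x, K x y * q x ∂μ) * ((p y)⁻¹ * F y ^ 2) ∂ν := by
        congr 1
        refine lintegral_congr fun y => ?_
        rw [← lintegral_mul_const'' _ (f := fun x => K x y * q x)
          ((hK.comp measurable_prodMk_right).mul hq).aemeasurable]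
        simp only [G, mul_comm (q _)]
    _ ≤ C₁ * ∫⁻ y, C₂ * p y * ((p y)⁻¹ * F y ^ 2) ∂ν := by
        gcongr with y; exact h₂ y
    _ = C₁ * C₂ * ∫⁻ y, F y ^ 2 ∂ν := by
        simp_rw [mul_assoc, ← mul_assoc (p _), ENNReal.mul_inv_cancel (hp0 _) (hp_top _), one_mul,
          lintegral_const_mul'' C₂ (hF.pow_const 2)]

end Schur

section Homogeneous

variable {E : Type*} [NormedAddCommGroup E] [NormedSpace ℝ E] [FiniteDimensional ℝ E]
  [MeasurableSpace E] [BorelSpace E] (μ : Measure E) [μ.IsAddHaarMeasure]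

theorem setLIntegral_enorm_rpow_eq_mul_preimage_smul {R : ℝ} (hR : 0 < R) (S : Set E) (p : ℝ) :
    ∫⁻ z in S, ‖z‖ₑ ^ p ∂μ =
      ENNReal.ofReal R ^ (finrank ℝ E + p) * ∫⁻ z in (R • ·) ⁻¹' S, ‖z‖ₑ ^ p ∂μ := by
  have hmp : MeasurePreserving (R • ·) μ (ENNReal.ofReal |(R ^ finrank ℝ E)⁻¹| • μ) :=
    ⟨measurable_const_smul R, Measure.map_addHaar_smul μ hR.ne'⟩
  have hchange := hmp.setLIntegral_comp_preimage_emb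
    (MeasurableEquiv.smul₀ R hR.ne').measurableEmbedding (‖·‖ₑ ^ p) S
  have hsmul : ∀ z : E, ‖R • z‖ₑ ^ p = ENNReal.ofReal R ^ p * ‖z‖ₑ ^ p := fun z => by
    rw [enorm_smul, Real.enorm_of_nonneg hR.le,
      ENNReal.mul_rpow_of_ne_top ENNReal.ofReal_ne_top enorm_ne_top]
  have hRd : ENNReal.ofReal (R ^ finrank ℝ E) ≠ 0 := by positivity
  simp only [hsmul, Measure.restrict_smul, lintegral_smul_measure, smul_eq_mul,
    abs_of_pos (inv_pos.2 (pow_pos hR _)), ENNReal.ofReal_inv_of_pos (pow_pos hR _)] at hchange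
  rw [lintegral_const_mul' _ _ (ENNReal.rpow_ne_top_of_ne_zero (by positivity)
    ENNReal.ofReal_ne_top)] at hchange
  rw [ENNReal.rpow_add _ _ (by positivity) ENNReal.ofReal_ne_top, ENNReal.rpow_natCast,
    ← ENNReal.ofReal_pow hR.le, mul_assoc, hchange, ENNReal.mul_inv_cancel_left hRd
    ENNReal.ofReal_ne_top]

theorem setLIntegral_closedBall_enorm_rpow {R : ℝ} (hR : 0 < R) (p : ℝ) :
    ∫⁻ z in closedBall 0 R, ‖z‖ₑ ^ p ∂μ =
      ENNReal.ofReal R ^ (finrank ℝ E + p) * ∫⁻ z in closedBall 0 1, ‖z‖ₑ ^ p ∂μ := by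
  rw [setLIntegral_enorm_rpow_eq_mul_preimage_smul μ hR, preimage_smul_closedBall_zero hR]

theorem setLIntegral_compl_closedBall_enorm_rpow {R : ℝ} (hR : 0 < R) (p : ℝ) :
    ∫⁻ z in (closedBall 0 R)ᶜ, ‖z‖ₑ ^ p ∂μ =
      ENNReal.ofReal R ^ (finrank ℝ E + p) * ∫⁻ z in (closedBall 0 1)ᶜ, ‖z‖ₑ ^ p ∂μ := by
  rw [setLIntegral_enorm_rpow_eq_mul_preimage_smul μ hR, preimage_compl,
    preimage_smul_closedBall_zero hR]

theorem setLIntegral_closedBall_enorm_rpow_lt_top [Nontrivial E] {p : ℝ}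
    (hp : -(finrank ℝ E : ℝ) < p) : ∫⁻ z in closedBall 0 1, ‖z‖ₑ ^ p ∂μ < ∞ := by
  have hint : IntegrableOn (fun z : E => ‖z‖ ^ p) (ball 0 2) μ :=
    integrableOn_ball_of_norm_le_rpow (C := 1) (α := -p) Module.finrank_pos (by linarith)
      (ae_of_all _ fun z => by simp [abs_of_nonneg (Real.rpow_nonneg (norm_nonneg z) p)])
      ((measurable_norm.pow_const p).aestronglyMeasurable)
  calc ∫⁻ z in closedBall 0 1, ‖z‖ₑ ^ p ∂μ
      = ∫⁻ z in closedBall 0 1, ENNReal.ofReal (‖z‖ ^ p) ∂μ :=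
        setLIntegral_congr_fun_ae measurableSet_closedBall <|
          (μ.ae_ne 0).mono fun z hz _ => enorm_rpow_of_ne_zero hz p
    _ < ∞ := (hint.mono_set (closedBall_subset_ball one_lt_two)).setLIntegral_lt_top

theorem setLIntegral_compl_closedBall_enorm_rpow_lt_top {q : ℝ}
    (hq : q < -(finrank ℝ E : ℝ)) : ∫⁻ z in (closedBall 0 1)ᶜ, ‖z‖ₑ ^ q ∂μ < ∞ := by
  have hq0 : q < 0 := hq.trans_le (by simp)
  calc ∫⁻ z in (closedBall 0 1)ᶜ, ‖z‖ₑ ^ q ∂μ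
      ≤ ∫⁻ z in (closedBall 0 1)ᶜ,
          ENNReal.ofReal (2 ^ (-q)) * ENNReal.ofReal ((1 + ‖z‖) ^ (-(-q))) ∂μ := by
        refine setLIntegral_mono (by fun_prop) fun z hz => ?_
        have hz1 : 1 < ‖z‖ := by simpa using hz
        rw [enorm_rpow_of_ne_zero (norm_pos_iff.1 (one_pos.trans hz1)), neg_neg,
          ← ENNReal.ofReal_mul (by positivity : (0:ℝ) ≤ 2 ^ (-q))]
        refine ENNReal.ofReal_le_ofReal ?_
        calc ‖z‖ ^ q = 2 ^ (-q) * (2 * ‖z‖) ^ q := by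
              rw [Real.mul_rpow zero_le_two (norm_nonneg z), ← mul_assoc,
                ← Real.rpow_add zero_lt_two, neg_add_cancel, Real.rpow_zero, one_mul]
          _ ≤ 2 ^ (-q) * (1 + ‖z‖) ^ q := mul_le_mul_of_nonneg_left
              (Real.rpow_le_rpow_of_nonpos (by positivity) (by linarith) hq0.le) (by positivity)
    _ ≤ ∫⁻ z, ENNReal.ofReal (2 ^ (-q)) * ENNReal.ofReal ((1 + ‖z‖) ^ (-(-q))) ∂μ :=
        setLIntegral_le_lintegral _ _
    _ < ∞ := by
        rw [lintegral_const_mul' _ _ ENNReal.ofReal_ne_top]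
        exact ENNReal.mul_lt_top ENNReal.ofReal_lt_top
          (finite_integral_one_add_norm (by linarith))

variable {a b : ℝ}

theorem setLIntegral_near_diagonal_le [Nontrivial E] (ha : 0 < a) (hb : 0 ≤ b) :
    ∃ C ≠ ∞, ∀ x : E,
      ∫⁻ y in (· - x) ⁻¹' closedBall 0 (2⁻¹ * japaneseBracket x),
          ‖x - y‖ₑ ^ (a - finrank ℝ E) * ENNReal.ofReal (japaneseBracket y) ^ (-b) ∂μ ≤
        C * ENNReal.ofReal (japaneseBracket x) ^ (a - b) := by
  set I := ∫⁻ z in closedBall 0 1, ‖z‖ₑ ^ (a - finrank ℝ E) ∂μ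
  have hI : I ≠ ∞ := (setLIntegral_closedBall_enorm_rpow_lt_top μ (by linarith)).ne
  refine ⟨ENNReal.ofReal 4⁻¹ ^ (-b) * ENNReal.ofReal 2⁻¹ ^ (finrank ℝ E + (a - finrank ℝ E)) * I,
    by finiteness, fun x => ?_⟩
  set r := japaneseBracket x
  have hr := japaneseBracket_pos x
  calc ∫⁻ y in (· - x) ⁻¹' closedBall 0 (2⁻¹ * r),
          ‖x - y‖ₑ ^ (a - finrank ℝ E) * ENNReal.ofReal (japaneseBracket y) ^ (-b) ∂μ
      ≤ ∫⁻ y in (· - x) ⁻¹' closedBall 0 (2⁻¹ * r),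
          ENNReal.ofReal (4⁻¹ * r) ^ (-b) * ‖y - x‖ₑ ^ (a - finrank ℝ E) ∂μ := by
        refine setLIntegral_mono' (measurableSet_closedBall.preimage (measurable_sub_const x))
          fun y hy => ?_
        have hy : ‖y - x‖ ≤ 2⁻¹ * r := by simpa using hy
        have hxy : r ≤ 4 * japaneseBracket y := japaneseBracket_le_four_mul hy
        rw [enorm_sub_rev, mul_comm]
        exact mul_le_mul_left (ENNReal.rpow_le_rpow_of_nonpos
          (ENNReal.ofReal_le_ofReal (by linarith)) (neg_nonpos.2 hb)) _
    _ = ENNReal.ofReal (4⁻¹ * r) ^ (-b) *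
          (ENNReal.ofReal (2⁻¹ * r) ^ (finrank ℝ E + (a - finrank ℝ E)) * I) := by
        rw [lintegral_const_mul' _ _ (by finiteness),
          (measurePreserving_sub_right μ x).setLIntegral_comp_preimage_emb
            (MeasurableEquiv.subRight x).measurableEmbedding (‖·‖ₑ ^ (a - finrank ℝ E)),
          setLIntegral_closedBall_enorm_rpow μ (by positivity)]
    _ = _ := ENNReal.ofReal_mul_rpow_mul_ofReal_mul_rpow (by norm_num) (by norm_num) hr
          (by ring) I

theorem setLIntegral_mid_range_le [Nontrivial E] (ha : a ≤ finrank ℝ E) (hb : 0 ≤ b)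
    (hbd : b < finrank ℝ E) :
    ∃ C ≠ ∞, ∀ x : E,
      ∫⁻ y in ((· - x) ⁻¹' closedBall 0 (2⁻¹ * japaneseBracket x))ᶜ ∩
          closedBall 0 (2 * japaneseBracket x),
          ‖x - y‖ₑ ^ (a - finrank ℝ E) * ENNReal.ofReal (japaneseBracket y) ^ (-b) ∂μ ≤
        C * ENNReal.ofReal (japaneseBracket x) ^ (a - b) := by
  set I := ∫⁻ z in closedBall 0 1, ‖z‖ₑ ^ (-b) ∂μ
  have hI : I ≠ ∞ := (setLIntegral_closedBall_enorm_rpow_lt_top μ (by linarith)).ne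
  refine ⟨ENNReal.ofReal 2⁻¹ ^ (a - finrank ℝ E) * ENNReal.ofReal 2 ^ (finrank ℝ E + -b) * I,
    by finiteness, fun x => ?_⟩
  set r := japaneseBracket x
  have hr : 0 < r := japaneseBracket_pos x
  calc ∫⁻ y in ((· - x) ⁻¹' closedBall 0 (2⁻¹ * r))ᶜ ∩ closedBall 0 (2 * r),
          ‖x - y‖ₑ ^ (a - finrank ℝ E) * ENNReal.ofReal (japaneseBracket y) ^ (-b) ∂μ
      ≤ ∫⁻ y in ((· - x) ⁻¹' closedBall 0 (2⁻¹ * r))ᶜ ∩ closedBall 0 (2 * r),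
          ENNReal.ofReal (2⁻¹ * r) ^ (a - finrank ℝ E) * ‖y‖ₑ ^ (-b) ∂μ := by
        refine setLIntegral_mono' ((measurableSet_closedBall.preimage
          (measurable_sub_const x)).compl.inter measurableSet_closedBall) fun y hy => ?_
        have hy : 2⁻¹ * r < ‖x - y‖ := by simpa [norm_sub_rev] using hy.1
        gcongr ?_ * ?_
        · refine ENNReal.rpow_le_rpow_of_nonpos ?_ (by linarith)
          rw [← ofReal_norm]
          exact ENNReal.ofReal_le_ofReal hy.le
        · exact ENNReal.rpow_le_rpow_of_nonpos (enorm_le_ofReal_japaneseBracket y)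
            (neg_nonpos.2 hb)
    _ ≤ ∫⁻ y in closedBall 0 (2 * r),
          ENNReal.ofReal (2⁻¹ * r) ^ (a - finrank ℝ E) * ‖y‖ₑ ^ (-b) ∂μ :=
        lintegral_mono_set inter_subset_right
    _ = ENNReal.ofReal (2⁻¹ * r) ^ (a - finrank ℝ E) *
          (ENNReal.ofReal (2 * r) ^ (finrank ℝ E + -b) * I) := by
        rw [lintegral_const_mul' _ _ (by finiteness),
          setLIntegral_closedBall_enorm_rpow μ (by positivity)]
    _ = _ := ENNReal.ofReal_mul_rpow_mul_ofReal_mul_rpow (by norm_num) (by norm_num) hr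
          (by ring) I

theorem setLIntegral_far_range_le (ha : a ≤ finrank ℝ E) (hb : 0 ≤ b) (hab : a < b) :
    ∃ C ≠ ∞, ∀ x : E,
      ∫⁻ y in (closedBall 0 (2 * japaneseBracket x))ᶜ,
          ‖x - y‖ₑ ^ (a - finrank ℝ E) * ENNReal.ofReal (japaneseBracket y) ^ (-b) ∂μ ≤
        C * ENNReal.ofReal (japaneseBracket x) ^ (a - b) := by
  set I := ∫⁻ z in (closedBall 0 1)ᶜ, ‖z‖ₑ ^ (a - finrank ℝ E + -b) ∂μ
  have hI : I ≠ ∞ := (setLIntegral_compl_closedBall_enorm_rpow_lt_top μ (by linarith)).ne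
  refine ⟨ENNReal.ofReal 2⁻¹ ^ (a - finrank ℝ E) * ENNReal.ofReal 2 ^ (a - b) * I,
    by finiteness, fun x => ?_⟩
  set r := japaneseBracket x
  have hr : 0 < r := japaneseBracket_pos x
  calc ∫⁻ y in (closedBall 0 (2 * r))ᶜ,
          ‖x - y‖ₑ ^ (a - finrank ℝ E) * ENNReal.ofReal (japaneseBracket y) ^ (-b) ∂μ
      ≤ ∫⁻ y in (closedBall 0 (2 * r))ᶜ,
          ENNReal.ofReal 2⁻¹ ^ (a - finrank ℝ E) * ‖y‖ₑ ^ (a - finrank ℝ E + -b) ∂μ := by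
        refine setLIntegral_mono' measurableSet_closedBall.compl fun y hy => ?_
        have hy : 2 * r < ‖y‖ := by simpa using hy
        have hy0 : ‖y‖ₑ ≠ 0 := enorm_ne_zero.2 (norm_pos_iff.1 (by linarith))
        rw [ENNReal.rpow_add _ _ hy0 enorm_ne_top, ← mul_assoc,
          ← ENNReal.mul_rpow_of_ne_top ENNReal.ofReal_ne_top enorm_ne_top]
        gcongr ?_ * ?_
        · refine ENNReal.rpow_le_rpow_of_nonpos ?_ (by linarith)
          rw [← ofReal_norm, ← ofReal_norm, ← ENNReal.ofReal_mul (by norm_num)]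
          exact ENNReal.ofReal_le_ofReal (by linarith [norm_le_two_mul_norm_sub hy])
        · exact ENNReal.rpow_le_rpow_of_nonpos (enorm_le_ofReal_japaneseBracket y)
            (neg_nonpos.2 hb)
    _ = ENNReal.ofReal 2⁻¹ ^ (a - finrank ℝ E) *
          (ENNReal.ofReal (2 * r) ^ (finrank ℝ E + (a - finrank ℝ E + -b)) * I) := by
        rw [lintegral_const_mul' _ _ (by finiteness),
          setLIntegral_compl_closedBall_enorm_rpow μ (by positivity)]
    _ = _ := by
        rw [show (finrank ℝ E : ℝ) + (a - finrank ℝ E + -b) = a - b by ring,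
          ENNReal.ofReal_mul zero_le_two,
          ENNReal.mul_rpow_of_ne_top ENNReal.ofReal_ne_top ENNReal.ofReal_ne_top]
        ring

theorem lintegral_enorm_sub_rpow_mul_japaneseBracket_rpow_le [Nontrivial E] (ha : 0 < a)
    (hab : a < b) (hbd : b < finrank ℝ E) :
    ∃ C ≠ ∞, ∀ x : E,
      ∫⁻ y, ‖x - y‖ₑ ^ (a - finrank ℝ E) * ENNReal.ofReal (japaneseBracket y) ^ (-b) ∂μ ≤
        C * ENNReal.ofReal (japaneseBracket x) ^ (a - b) := by
  obtain ⟨C₁, hC₁, h₁⟩ := setLIntegral_near_diagonal_le μ ha (by linarith)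
  obtain ⟨C₂, hC₂, h₂⟩ := setLIntegral_mid_range_le μ (a := a) (by linarith) (by linarith) hbd
  obtain ⟨C₃, hC₃, h₃⟩ := setLIntegral_far_range_le μ (a := a) (by linarith) (by linarith) hab
  refine ⟨C₁ + C₂ + C₃, by finiteness, fun x => ?_⟩
  set f := fun y => ‖x - y‖ₑ ^ (a - finrank ℝ E) * ENNReal.ofReal (japaneseBracket y) ^ (-b)
  set A := (· - x) ⁻¹' closedBall (0 : E) (2⁻¹ * japaneseBracket x)
  set B := closedBall (0 : E) (2 * japaneseBracket x)
  calc ∫⁻ y, f y ∂μ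
      = ∫⁻ y in A, f y ∂μ + (∫⁻ y in Aᶜ ∩ B, f y ∂μ + ∫⁻ y in Aᶜ \ B, f y ∂μ) := by
        rw [lintegral_inter_add_sdiff _ _ measurableSet_closedBall, lintegral_add_compl _
          (measurableSet_closedBall.preimage (measurable_sub_const x))]
    _ ≤ ∫⁻ y in A, f y ∂μ + (∫⁻ y in Aᶜ ∩ B, f y ∂μ + ∫⁻ y in Bᶜ, f y ∂μ) := by
        gcongr
        exact sdiff_subset_compl _ _
    _ ≤ C₁ * ENNReal.ofReal (japaneseBracket x) ^ (a - b) +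
          (C₂ * ENNReal.ofReal (japaneseBracket x) ^ (a - b) +
            C₃ * ENNReal.ofReal (japaneseBracket x) ^ (a - b)) :=
        add_le_add (h₁ x) (add_le_add (h₂ x) (h₃ x))
    _ = (C₁ + C₂ + C₃) * ENNReal.ofReal (japaneseBracket x) ^ (a - b) := by ring

theorem lintegral_sq_lintegral_weightedRieszKernel_mul_le {s t : ℝ}
    (h1 : -(finrank ℝ E : ℝ) / 2 < t) (h2 : t < s) (h3 : s < finrank ℝ E / 2) :
    ∃ C ≠ ∞, ∀ F : E → ℝ≥0∞, AEMeasurable F μ →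
      ∫⁻ x, (∫⁻ y, weightedRieszKernel t s (s - t - finrank ℝ E) x y * F y ∂μ) ^ 2 ∂μ ≤
        C * ∫⁻ y, F y ^ 2 ∂μ := by
  have : Nontrivial E := Module.nontrivial_of_finrank_pos (R := ℝ) (by
    exact_mod_cast (by linarith : (0 : ℝ) < finrank ℝ E))
  obtain ⟨α, hα_lo, hα_hi⟩ := exists_between (show
      max (s - finrank ℝ E) (-t - finrank ℝ E) < min t (-s) by
    simp only [max_lt_iff, lt_min_iff]; refine ⟨⟨?_, ?_⟩, ?_, ?_⟩ <;> linarith)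
  rw [max_lt_iff] at hα_lo
  rw [lt_min_iff] at hα_hi
  obtain ⟨C₁, hC₁, h₁⟩ := lintegral_enorm_sub_rpow_mul_japaneseBracket_rpow_le μ
    (a := s - t) (b := s - α) (by linarith) (by linarith) (by linarith)
  obtain ⟨C₂, hC₂, h₂⟩ := lintegral_enorm_sub_rpow_mul_japaneseBracket_rpow_le μ
    (a := s - t) (b := -t - α) (by linarith) (by linarith) (by linarith)
  refine ⟨C₁ * C₂, by finiteness, fun F hF => lintegral_sq_lintegral_mul_le_of_schur
    (by unfold weightedRieszKernel; fun_prop) (p := fun y => ENNReal.ofReal (japaneseBracket y) ^ α)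
    (q := fun x => ENNReal.ofReal (japaneseBracket x) ^ α) (by fun_prop) (by fun_prop)
    (ofReal_japaneseBracket_rpow_ne_zero · α) (ofReal_japaneseBracket_rpow_ne_top · α)
    (fun x => ?_) (fun y => ?_) hF⟩
  · calc ∫⁻ y, weightedRieszKernel t s (s - t - finrank ℝ E) x y *
            ENNReal.ofReal (japaneseBracket y) ^ α ∂μ
        = ENNReal.ofReal (japaneseBracket x) ^ t * ∫⁻ y, ‖x - y‖ₑ ^ (s - t - finrank ℝ E) *
            ENNReal.ofReal (japaneseBracket y) ^ (-(s - α)) ∂μ := by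
          rw [← lintegral_const_mul' _ _ (ofReal_japaneseBracket_rpow_ne_top x t)]
          refine lintegral_congr fun y => ?_
          rw [weightedRieszKernel, mul_assoc, ofReal_japaneseBracket_rpow_mul_rpow, mul_assoc,
            show -s + α = -(s - α) by ring]
      _ ≤ ENNReal.ofReal (japaneseBracket x) ^ t *
            (C₁ * ENNReal.ofReal (japaneseBracket x) ^ (s - t - (s - α))) := by
          gcongr; exact h₁ x
      _ = C₁ * ENNReal.ofReal (japaneseBracket x) ^ α := by
          rw [mul_left_comm, ofReal_japaneseBracket_rpow_mul_rpow,
            show t + (s - t - (s - α)) = α by ring]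
  · calc ∫⁻ x, weightedRieszKernel t s (s - t - finrank ℝ E) x y *
            ENNReal.ofReal (japaneseBracket x) ^ α ∂μ
        = ENNReal.ofReal (japaneseBracket y) ^ (-s) * ∫⁻ x, ‖y - x‖ₑ ^ (s - t - finrank ℝ E) *
            ENNReal.ofReal (japaneseBracket x) ^ (-(-t - α)) ∂μ := by
          rw [← lintegral_const_mul' _ _ (ofReal_japaneseBracket_rpow_ne_top y (-s))]
          refine lintegral_congr fun x => ?_
          rw [weightedRieszKernel, enorm_sub_rev, show -(-t - α) = t + α by ring,
            ← ofReal_japaneseBracket_rpow_mul_rpow]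
          ring
      _ ≤ ENNReal.ofReal (japaneseBracket y) ^ (-s) *
            (C₂ * ENNReal.ofReal (japaneseBracket y) ^ (s - t - (-t - α))) := by
          gcongr; exact h₂ y
      _ = C₂ * ENNReal.ofReal (japaneseBracket y) ^ α := by
          rw [mul_left_comm, ofReal_japaneseBracket_rpow_mul_rpow,
            show -s + (s - t - (-t - α)) = α by ring]

end Homogeneous

end MeasureTheory

open MeasureTheory

theorem mcowen_weighted_kernel_estimate_general
    (N : ℕ) (s t : ℝ)
    (h1 : -(N : ℝ) / 2 < t) (h2 : t < s) (h3 : s < (N : ℝ) / 2) :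
    ∃ C > (0 : ℝ), ∀ f : EuclideanSpace ℝ (Fin N) → ℝ,
      AEStronglyMeasurable f volume →
      eLpNorm (fun x => (1 + ‖x‖ ^ 2) ^ (t / 2) *
          ∫ y : EuclideanSpace ℝ (Fin N), ‖x - y‖ ^ (s - t - (N : ℝ)) * f y) 2 volume ≤
        ENNReal.ofReal C *
          eLpNorm (fun x => (1 + ‖x‖ ^ 2) ^ (s / 2) * f x) 2 volume := by
  obtain ⟨C, hC, hK⟩ := lintegral_sq_lintegral_weightedRieszKernel_mul_le
    (volume : Measure (EuclideanSpace ℝ (Fin N))) (s := s) (t := t)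
    (by simpa using h1) h2 (by simpa using h3)
  simp only [finrank_euclideanSpace_fin] at hK
  refine ⟨C.toReal + 1, by positivity, fun f hf => eLpNorm_two_le_of_lintegral_sq_le ?_⟩
  calc ∫⁻ x, ‖(1 + ‖x‖ ^ 2) ^ (t / 2) *
          ∫ y : EuclideanSpace ℝ (Fin N), ‖x - y‖ ^ (s - t - (N : ℝ)) * f y‖ₑ ^ 2
      ≤ ∫⁻ x, (∫⁻ y, weightedRieszKernel t s (s - t - N) x y *
          ‖(1 + ‖y‖ ^ 2) ^ (s / 2) * f y‖ₑ) ^ 2 :=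
        lintegral_mono fun x => by
          gcongr; exact enorm_one_add_norm_sq_rpow_mul_integral_le _ f s t _ x
    _ ≤ C * ∫⁻ y, ‖(1 + ‖y‖ ^ 2) ^ (s / 2) * f y‖ₑ ^ 2 :=
        hK (fun y => ‖(1 + ‖y‖ ^ 2) ^ (s / 2) * f y‖ₑ)
          (((measurable_const.add (measurable_norm.pow_const 2)).pow_const (s / 2)).aemeasurable.mul
            hf.aemeasurable).enorm
    _ ≤ _ := by gcongr; exact ENNReal.le_ofReal_toReal_add_one_sq hC

theorem mcowen_weighted_kernel_estimate
    (N : ℕ) (hN : 1 ≤ N) (s t : ℝ)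
    (h1 : -(N : ℝ) / 2 < t) (h2 : t < s) (h3 : s < (N : ℝ) / 2) :
    ∃ C > (0 : ℝ), ∀ f : EuclideanSpace ℝ (Fin N) → ℝ,
      AEStronglyMeasurable f volume →
      eLpNorm (fun x => (1 + ‖x‖ ^ 2) ^ (t / 2) *
          ∫ y : EuclideanSpace ℝ (Fin N), ‖x - y‖ ^ (s - t - (N : ℝ)) * f y) 2 volume ≤
        ENNReal.ofReal C *
          eLpNorm (fun x => (1 + ‖x‖ ^ 2) ^ (s / 2) * f x) 2 volume :=
  mcowen_weighted_kernel_estimate_general N s t h1 h2 h3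
end
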